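/- arXiv:1804.05590 — 2 statements merged into one kernel-verified Lean document; each statement's English description precedes it below -/
import Mathlib

section
/- Let E be a real inner product space and let p ≥ 2 be real. Then for all a, b ∈ E, ⟨‖a‖^{p-2} a - ‖b‖^{p-2} b, a - b⟩ ≥ 2^{2-p} ‖a - b‖^p. -/
/-!
Put `x = ‖a‖`, `y = ‖b‖`, `t = ‖a - b‖`. The left side is `2^{2-p} (t²)^{p/2}`, a convex function
of `t²`, while the inner product is `½ (x^{p-2} + y^{p-2}) t² + ½ (x^{p-2} - y^{p-2}) (x² - y²)`, an
affine function of `t²`. As `|x - y| ≤ t ≤ x + y`, it suffices to check the two extreme cases, i.e.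
collinear `a` and `b`; there the inequality follows from the superadditivity and the midpoint
convexity of `s ↦ s^{p-1}` on `[0, ∞)`.
-/

open Set

theorem ConvexOn.le_mul_add_of_mem_Icc {f : ℝ → ℝ} {s : Set ℝ} (hf : ConvexOn ℝ s f)
    {u v z k c : ℝ} (hu : u ∈ s) (hv : v ∈ s) (hfu : f u ≤ k * u + c) (hfv : f v ≤ k * v + c)
    (hz : z ∈ Icc u v) : f z ≤ k * z + c := by
  have hg : ConvexOn ℝ s (fun w ↦ f w - (k * w + c)) :=
    hf.sub (((LinearMap.mul ℝ ℝ k).concaveOn hf.1).add_const c)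
  have := hg.le_max_of_mem_Icc hu hv hz
  linarith [max_le (sub_nonpos.2 hfu) (sub_nonpos.2 hfv)]

theorem real_inner_smul_sub_smul_sub {E : Type*} [NormedAddCommGroup E] [InnerProductSpace ℝ E]
    (α β : ℝ) (a b : E) :
    inner ℝ (α • a - β • b) (a - b) =
      (α + β) / 2 * ‖a - b‖ ^ 2 + (α - β) * (‖a‖ ^ 2 - ‖b‖ ^ 2) / 2 := by
  rw [← real_inner_self_eq_norm_sq, ← real_inner_self_eq_norm_sq, ← real_inner_self_eq_norm_sq]
  simp only [inner_sub_left, inner_sub_right, real_inner_smul_left, real_inner_comm a b]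
  ring

namespace Real

variable {p x y : ℝ}

theorem rpow_sub_one_mul_self (hx : 0 ≤ x) (hp : p ≠ 0) : x ^ (p - 1) * x = x ^ p := by
  rw [← rpow_add_one' hx (by simpa), sub_add_cancel]

theorem two_rpow_two_sub_mul_add_rpow_le (hp : 2 ≤ p) (hx : 0 ≤ x) (hy : 0 ≤ y) :
    2 ^ (2 - p) * (x + y) ^ p ≤ (x ^ (p - 1) + y ^ (p - 1)) * (x + y) := by
  have hxy : 0 ≤ x + y := add_nonneg hx hy
  have hmean : (x + y) ^ (p - 1) ≤ 2 ^ (p - 2) * (x ^ (p - 1) + y ^ (p - 1)) := by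
    lift x to NNReal using hx
    lift y to NNReal using hy
    have := NNReal.rpow_add_le_mul_rpow_add_rpow x y (p := p - 1) (by linarith)
    rw [show p - 1 - 1 = p - 2 by ring] at this
    exact_mod_cast this
  calc 2 ^ (2 - p) * (x + y) ^ p = 2 ^ (2 - p) * (x + y) ^ (p - 1) * (x + y) := by
        rw [mul_assoc, rpow_sub_one_mul_self hxy (by positivity)]
    _ ≤ 2 ^ (2 - p) * (2 ^ (p - 2) * (x ^ (p - 1) + y ^ (p - 1))) * (x + y) := by gcongr
    _ = (x ^ (p - 1) + y ^ (p - 1)) * (x + y) := by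
        rw [← mul_assoc, ← rpow_add two_pos]; norm_num

theorem two_rpow_two_sub_mul_sub_rpow_le (hp : 2 ≤ p) (hy : 0 ≤ y) (hyx : y ≤ x) :
    2 ^ (2 - p) * (x - y) ^ p ≤ (x ^ (p - 1) - y ^ (p - 1)) * (x - y) := by
  have hxy : 0 ≤ x - y := sub_nonneg.2 hyx
  have hsuper : (x - y) ^ (p - 1) + y ^ (p - 1) ≤ x ^ (p - 1) := by
    simpa using add_rpow_le_rpow_add hxy hy (p := p - 1) (by linarith)
  calc 2 ^ (2 - p) * (x - y) ^ p ≤ (x - y) ^ p :=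
        mul_le_of_le_one_left (rpow_nonneg hxy p)
          (rpow_le_one_of_one_le_of_nonpos one_le_two (by linarith))
    _ = (x - y) ^ (p - 1) * (x - y) := (rpow_sub_one_mul_self hxy (by positivity)).symm
    _ ≤ (x ^ (p - 1) - y ^ (p - 1)) * (x - y) := by gcongr; linarith

theorem two_rpow_two_sub_mul_abs_sub_rpow_le (hp : 2 ≤ p) (hx : 0 ≤ x) (hy : 0 ≤ y) :
    2 ^ (2 - p) * |x - y| ^ p ≤ (x ^ (p - 1) - y ^ (p - 1)) * (x - y) := by
  rcases le_total y x with hyx | hxy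
  · rw [abs_of_nonneg (sub_nonneg.2 hyx)]
    exact two_rpow_two_sub_mul_sub_rpow_le hp hy hyx
  · rw [abs_sub_comm, abs_of_nonneg (sub_nonneg.2 hxy)]
    linarith [two_rpow_two_sub_mul_sub_rpow_le hp hx hxy]

theorem two_rpow_two_sub_mul_rpow_le {t : ℝ} (hp : 2 ≤ p) (hx : 0 ≤ x) (hy : 0 ≤ y)
    (ht : t ∈ Icc |x - y| (x + y)) :
    2 ^ (2 - p) * t ^ p ≤
      (x ^ (p - 2) + y ^ (p - 2)) / 2 * t ^ 2 + (x ^ (p - 2) - y ^ (p - 2)) * (x ^ 2 - y ^ 2) / 2 := by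
  have hsq {z : ℝ} (hz : 0 ≤ z) : z ^ p = (z ^ 2) ^ (p / 2) := by
    rw [← rpow_natCast_mul hz]; ring_nf
  have hconv : ConvexOn ℝ (Ici 0) fun s : ℝ ↦ 2 ^ (2 - p) * s ^ (p / 2) :=
    (convexOn_rpow (by linarith)).smul (rpow_nonneg zero_le_two _)
  have hx' : x ^ (p - 1) = x ^ (p - 2) * x := by
    rw [← rpow_add_one' hx (by linarith)]; ring_nf
  have hy' : y ^ (p - 1) = y ^ (p - 2) * y := by
    rw [← rpow_add_one' hy (by linarith)]; ring_nf
  have hs : t ^ 2 ∈ Icc (|x - y| ^ 2) ((x + y) ^ 2) :=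
    ⟨pow_le_pow_left₀ (abs_nonneg _) ht.1 2, pow_le_pow_left₀ (ht.1.trans' (abs_nonneg _)) ht.2 2⟩
  rw [hsq ((abs_nonneg _).trans ht.1)]
  refine hconv.le_mul_add_of_mem_Icc (sq_nonneg |x - y|) (sq_nonneg (x + y)) ?_ ?_ hs
  · rw [← hsq (abs_nonneg _), sq_abs]
    convert two_rpow_two_sub_mul_abs_sub_rpow_le hp hx hy using 1
    rw [hx', hy']; ring
  · rw [← hsq (add_nonneg hx hy)]
    convert two_rpow_two_sub_mul_add_rpow_le hp hx hy using 1
    rw [hx', hy']; ring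

end Real

/-- Strong monotonicity of the `p`-Laplacian vector field `ξ ↦ ‖ξ‖^{p-2} ξ` for `p ≥ 2`:
`⟨‖a‖^{p-2} a - ‖b‖^{p-2} b, a - b⟩ ≥ 2^{2-p} ‖a - b‖^p`. -/
theorem pLaplace_strong_monotonicity {E : Type*} [NormedAddCommGroup E]
    [InnerProductSpace ℝ E] (p : ℝ) (hp : 2 ≤ p) (a b : E) :
    (2 : ℝ) ^ (2 - p) * ‖a - b‖ ^ p ≤
      (inner ℝ (‖a‖ ^ (p - 2) • a - ‖b‖ ^ (p - 2) • b) (a - b) : ℝ) := by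
  rw [real_inner_smul_sub_smul_sub]
  exact Real.two_rpow_two_sub_mul_rpow_le hp (norm_nonneg a) (norm_nonneg b)
    ⟨abs_norm_sub_norm_le a b, norm_sub_le a b⟩
end

section
/- Let λ > 0, a > 0, γ > 0, and let p, q be real numbers with p > 1 and q ≥ 1 and q > p - 1. Then there exists a unique C > 0 such that λ((p + γ - 1) C + (p - 1) a) = (q - p + 1) C^q (C + a)^{1+γ}; moreover λ((p + γ - 1) r + (p - 1) a) > (q - p + 1) r^q (r + a)^{1+γ} for all r ∈ (0, C), and the value C is nondecreasing as a function of λ. -/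
lemma key_cross (a γ p q : ℝ) (ha : 0 < a) (hγ : 0 < γ) (hp : 1 < p) (hq1 : 1 ≤ q)
    (hq2 : p - 1 < q) {r s : ℝ} (hr : 0 < r) (hrs : r < s) :
    ((q - p + 1) * r ^ q * (r + a) ^ (1 + γ)) * ((p + γ - 1) * s + (p - 1) * a) <
    ((q - p + 1) * s ^ q * (s + a) ^ (1 + γ)) * ((p + γ - 1) * r + (p - 1) * a) := by
  have hs : 0 < s := hr.trans hrs
  have hra : 0 < r + a := by linarith
  have hsa : 0 < s + a := by linarith
  have er : r ^ q = r ^ (q - 1) * r := by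
    conv_lhs => rw [show q = q - 1 + 1 by ring]
    rw [Real.rpow_add_one hr.ne']
  have es : s ^ q = s ^ (q - 1) * s := by
    conv_lhs => rw [show q = q - 1 + 1 by ring]
    rw [Real.rpow_add_one hs.ne']
  have era : (r + a) ^ (1 + γ) = (r + a) * (r + a) ^ γ := by
    rw [Real.rpow_add hra, Real.rpow_one]
  have esa : (s + a) ^ (1 + γ) = (s + a) * (s + a) ^ γ := by
    rw [Real.rpow_add hsa, Real.rpow_one]
  have hc : (0:ℝ) < q - p + 1 := by linarith
  have h1 : r ^ (q - 1) ≤ s ^ (q - 1) := Real.rpow_le_rpow hr.le hrs.le (by linarith)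
  have h2 : (r + a) ^ γ < (s + a) ^ γ := Real.rpow_lt_rpow hra.le (by linarith) hγ
  have h3 : r * (r + a) * ((p + γ - 1) * s + (p - 1) * a) <
      s * (s + a) * ((p + γ - 1) * r + (p - 1) * a) := by
    nlinarith [mul_pos (mul_pos hr hs) (sub_pos.2 hrs),
      mul_pos (mul_pos ha (sub_pos.2 hrs)) (by linarith : (0:ℝ) < s + r + a)]
  have hp1 : (0:ℝ) < r ^ (q-1) := Real.rpow_pos_of_pos hr _
  have hp2 : (0:ℝ) < (r + a) ^ γ := Real.rpow_pos_of_pos hra _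
  have hp3 : (0:ℝ) < r * (r + a) * ((p + γ - 1) * s + (p - 1) * a) := by
    have : (0:ℝ) < (p + γ - 1) * s + (p - 1) * a := by nlinarith
    positivity
  have key : (q - p + 1) * (r ^ (q-1) * ((r + a) ^ γ * (r * (r + a) * ((p + γ - 1) * s + (p - 1) * a)))) <
      (q - p + 1) * (s ^ (q-1) * ((s + a) ^ γ * (s * (s + a) * ((p + γ - 1) * r + (p - 1) * a)))) := by
    have hXY : (r + a) ^ γ * (r * (r + a) * ((p + γ - 1) * s + (p - 1) * a)) <
        (s + a) ^ γ * (s * (s + a) * ((p + γ - 1) * r + (p - 1) * a)) :=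
      mul_lt_mul'' h2 h3 hp2.le hp3.le
    have h4 : r ^ (q-1) * ((r + a) ^ γ * (r * (r + a) * ((p + γ - 1) * s + (p - 1) * a))) <
        s ^ (q-1) * ((s + a) ^ γ * (s * (s + a) * ((p + γ - 1) * r + (p - 1) * a))) :=
      mul_lt_mul' h1 hXY (by positivity) (Real.rpow_pos_of_pos hs _)
    exact mul_lt_mul_of_pos_left h4 hc
  calc ((q - p + 1) * r ^ q * (r + a) ^ (1 + γ)) * ((p + γ - 1) * s + (p - 1) * a)
      = (q - p + 1) * (r ^ (q-1) * ((r + a) ^ γ * (r * (r + a) * ((p + γ - 1) * s + (p - 1) * a)))) := by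
        rw [er, era]; ring
    _ < (q - p + 1) * (s ^ (q-1) * ((s + a) ^ γ * (s * (s + a) * ((p + γ - 1) * r + (p - 1) * a)))) := key
    _ = ((q - p + 1) * s ^ q * (s + a) ^ (1 + γ)) * ((p + γ - 1) * r + (p - 1) * a) := by
        rw [es, esa]; ring
lemma exists_cross (lam a γ p q : ℝ) (hlam : 0 < lam) (ha : 0 < a)
    (hγ : 0 < γ) (hp : 1 < p) (hq1 : 1 ≤ q) (hq2 : p - 1 < q) :
    ∃ C : ℝ, 0 < C ∧
      lam * ((p + γ - 1) * C + (p - 1) * a) = (q - p + 1) * C ^ q * (C + a) ^ (1 + γ) := by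
  set F : ℝ → ℝ := fun r => (q - p + 1) * r ^ q * (r + a) ^ (1 + γ) -
    lam * ((p + γ - 1) * r + (p - 1) * a) with hF
  have hc : (0:ℝ) < q - p + 1 := by linarith
  have hcont : Continuous F := by
    apply Continuous.sub
    · exact (continuous_const.mul (Real.continuous_rpow_const (by linarith))).mul
        ((Real.continuous_rpow_const (by linarith)).comp (continuous_id.add continuous_const))
    · fun_prop
  -- small point b
  have hK : (0:ℝ) < (q - p + 1) * (1 + a) ^ (1 + γ) := by positivity
  set δ : ℝ := lam * ((p - 1) * a) with hδ
  have hδpos : 0 < δ := by have : (0:ℝ) < (p-1)*a := by nlinarith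
                           exact mul_pos hlam this
  have h2K : (0:ℝ) < 2 * ((q - p + 1) * (1 + a) ^ (1 + γ)) := by linarith
  set b : ℝ := min 1 (δ / (2 * ((q - p + 1) * (1 + a) ^ (1 + γ)))) with hb
  have hbpos : 0 < b := lt_min one_pos (div_pos hδpos h2K)
  have hb1 : b ≤ 1 := min_le_left _ _
  have hFb : F b < 0 := by
    have h1 : b ^ q ≤ b := by
      calc b ^ q ≤ b ^ (1:ℝ) := Real.rpow_le_rpow_of_exponent_ge hbpos hb1 hq1
        _ = b := Real.rpow_one b
    have h2 : (b + a) ^ (1 + γ) ≤ (1 + a) ^ (1 + γ) :=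
      Real.rpow_le_rpow (by linarith) (by linarith) (by linarith)
    have h3 : (q - p + 1) * b ^ q * (b + a) ^ (1 + γ) ≤
        (q - p + 1) * b * (1 + a) ^ (1 + γ) := by
      have hbq : 0 < b ^ q := Real.rpow_pos_of_pos hbpos _
      have := mul_le_mul (mul_le_mul_of_nonneg_left h1 hc.le) h2
        (Real.rpow_nonneg (by linarith) _) (by positivity)
      linarith
    have h4 : (q - p + 1) * b * (1 + a) ^ (1 + γ) ≤ δ / 2 := by
      have : b ≤ δ / (2 * ((q - p + 1) * (1 + a) ^ (1 + γ))) := min_le_right _ _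
      rw [le_div_iff₀ h2K] at this
      linarith
    have h5 : lam * ((p + γ - 1) * b + (p - 1) * a) ≥ δ := by
      have : (0:ℝ) ≤ lam * ((p + γ - 1) * b) := mul_nonneg hlam.le (mul_nonneg (by linarith) hbpos.le)
      simp only [hδ]; nlinarith
    simp only [hF]; linarith
  -- large point M
  set M : ℝ := max 1 ((lam * (p + γ - 1) + lam * ((p - 1) * a)) / (q - p + 1) + 1) with hM
  have hM1 : (1:ℝ) ≤ M := le_max_left _ _
  have hMpos : 0 < M := lt_of_lt_of_le one_pos hM1
  have hM2 : (lam * (p + γ - 1) + lam * ((p - 1) * a)) / (q - p + 1) + 1 ≤ M := le_max_right _ _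
  have hFM : 0 < F M := by
    have h1 : M ≤ M ^ q := by
      calc M = M ^ (1:ℝ) := (Real.rpow_one M).symm
        _ ≤ M ^ q := Real.rpow_le_rpow_of_exponent_le hM1 hq1
    have h2 : M ≤ (M + a) ^ (1 + γ) := by
      calc M = M ^ (1:ℝ) := (Real.rpow_one M).symm
        _ ≤ M ^ (1 + γ) := Real.rpow_le_rpow_of_exponent_le hM1 (by linarith)
        _ ≤ (M + a) ^ (1 + γ) := Real.rpow_le_rpow hMpos.le (by linarith) (by linarith)
    have h3 : (q - p + 1) * (M * M) ≤ (q - p + 1) * M ^ q * (M + a) ^ (1 + γ) := by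
      have := mul_le_mul (mul_le_mul_of_nonneg_left h1 hc.le) h2 hMpos.le (by positivity)
      linarith
    have h4 : lam * ((p + γ - 1) * M + (p - 1) * a) < (q - p + 1) * (M * M) := by
      have hdiv : lam * (p + γ - 1) + lam * ((p - 1) * a) < (q - p + 1) * M := by
        have h' : (lam * (p + γ - 1) + lam * ((p - 1) * a)) / (q - p + 1) ≤ M - 1 := by
          linarith
        rw [div_le_iff₀ hc] at h'
        nlinarith
      nlinarith [mul_le_mul_of_nonneg_left hM1 (mul_pos hlam (mul_pos (by linarith : (0:ℝ) < p - 1) ha)).le]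
    simp only [hF]; linarith
  have hbM : b ≤ M := hb1.trans hM1
  obtain ⟨C, hC, hFC⟩ := intermediate_value_Icc hbM hcont.continuousOn
    (Set.mem_Icc.2 ⟨hFb.le, hFM.le⟩)
  refine ⟨C, lt_of_lt_of_le hbpos hC.1, ?_⟩
  simp only [hF] at hFC
  linarith

/-- Unique crossing point of the affine function `r ↦ λ((p+γ-1)r + (p-1)a)` with the
convex function `r ↦ (q-p+1) r^q (r+a)^{1+γ}`: there is a unique `C > 0` at which they
are equal; below `C` the affine function dominates strictly; and the crossing point is
nondecreasing in `λ`. -/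
theorem unique_crossing_point (lam a γ p q : ℝ) (hlam : 0 < lam) (ha : 0 < a)
    (hγ : 0 < γ) (hp : 1 < p) (hq1 : 1 ≤ q) (hq2 : p - 1 < q) :
    (∃! C : ℝ, 0 < C ∧
      lam * ((p + γ - 1) * C + (p - 1) * a) = (q - p + 1) * C ^ q * (C + a) ^ (1 + γ)) ∧
    (∀ C : ℝ, 0 < C →
      lam * ((p + γ - 1) * C + (p - 1) * a) = (q - p + 1) * C ^ q * (C + a) ^ (1 + γ) →
      ∀ r : ℝ, 0 < r → r < C →
        (q - p + 1) * r ^ q * (r + a) ^ (1 + γ) < lam * ((p + γ - 1) * r + (p - 1) * a)) ∧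
    (∀ lam₁ lam₂ C₁ C₂ : ℝ, 0 < lam₁ → lam₁ ≤ lam₂ → 0 < C₁ →
      lam₁ * ((p + γ - 1) * C₁ + (p - 1) * a) = (q - p + 1) * C₁ ^ q * (C₁ + a) ^ (1 + γ) →
      0 < C₂ →
      lam₂ * ((p + γ - 1) * C₂ + (p - 1) * a) = (q - p + 1) * C₂ ^ q * (C₂ + a) ^ (1 + γ) →
      C₁ ≤ C₂) := by
  have Dpos : ∀ r : ℝ, 0 < r → 0 < (p + γ - 1) * r + (p - 1) * a := by
    intro r hr; nlinarith
  have mono : ∀ lam₁ lam₂ C₁ C₂ : ℝ, 0 < lam₁ → lam₁ ≤ lam₂ → 0 < C₁ →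
      lam₁ * ((p + γ - 1) * C₁ + (p - 1) * a) = (q - p + 1) * C₁ ^ q * (C₁ + a) ^ (1 + γ) →
      0 < C₂ →
      lam₂ * ((p + γ - 1) * C₂ + (p - 1) * a) = (q - p + 1) * C₂ ^ q * (C₂ + a) ^ (1 + γ) →
      C₁ ≤ C₂ := by
    intro lam₁ lam₂ C₁ C₂ h₁ h₁₂ hC₁ e₁ hC₂ e₂
    by_contra hlt
    push_neg at hlt
    have hk := key_cross a γ p q ha hγ hp hq1 hq2 hC₂ hlt
    rw [← e₁, ← e₂] at hk
    have hD₁ := Dpos C₁ hC₁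
    have hD₂ := Dpos C₂ hC₂
    nlinarith [mul_pos hD₁ hD₂, mul_pos (mul_pos h₁ hD₁) hD₂]
  refine ⟨?_, ?_, mono⟩
  · obtain ⟨C, hC, hCeq⟩ := exists_cross lam a γ p q hlam ha hγ hp hq1 hq2
    refine ⟨C, ⟨hC, hCeq⟩, ?_⟩
    rintro C' ⟨hC', hC'eq⟩
    exact le_antisymm (mono lam lam C' C hlam le_rfl hC' hC'eq hC hCeq)
      (mono lam lam C C' hlam le_rfl hC hCeq hC' hC'eq)
  · intro C hC hCeq r hr hrC
    have hk := key_cross a γ p q ha hγ hp hq1 hq2 hr hrC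
    rw [← hCeq] at hk
    have hDC := Dpos C hC
    have hDr := Dpos r hr
    refine lt_of_mul_lt_mul_right ?_ hDC.le
    calc (q - p + 1) * r ^ q * (r + a) ^ (1 + γ) * ((p + γ - 1) * C + (p - 1) * a)
          < lam * ((p + γ - 1) * C + (p - 1) * a) * ((p + γ - 1) * r + (p - 1) * a) := hk
        _ = lam * ((p + γ - 1) * r + (p - 1) * a) * ((p + γ - 1) * C + (p - 1) * a) := by ring
end
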